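/- For all S5 S10 : Finset ℤ, every element of V(S5, S10) allows the top Yukawa and is not pheno-constrained. -/
import Mathlib


/-- A charge spectrum for the `SU(5)` model: optional Higgs charges and
finite sets of distinct matter charges. -/
structure ChargeSpectrum where
  qHd : Option ℤ
  qHu : Option ℤ
  Q5 : Finset ℤ
  Q10 : Finset ℤ
deriving DecidableEq

namespace ChargeSpectrum

instance : HasSubset ChargeSpectrum where
  Subset x y :=
    x.qHd.toFinset ⊆ y.qHd.toFinset ∧
    x.qHu.toFinset ⊆ y.qHu.toFinset ∧
    x.Q5 ⊆ y.Q5 ∧ x.Q10 ⊆ y.Q10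

/-- `x` allows the top Yukawa coupling `10 10 5_Hu`. -/
def AllowsTopYukawa (x : ChargeSpectrum) : Prop :=
  ∃ q : ℤ, x.qHu = some q ∧ ∃ q1 ∈ x.Q10, ∃ q2 ∈ x.Q10, q1 + q2 = q

/-- `x` is complete: both Higgs sectors present, both matter sectors nonempty. -/
def IsComplete (x : ChargeSpectrum) : Prop :=
  x.qHd.isSome ∧ x.qHu.isSome ∧ x.Q5 ≠ ∅ ∧ x.Q10 ≠ ∅

/-- `x` allows at least one of the dangerous operators μ, β, Λ, W1, W2, W4, K1, K2. -/
def IsPhenoConstrained (x : ChargeSpectrum) : Prop :=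
  (∃ a : ℤ, x.qHd = some a ∧ x.qHu = some a) ∨
  (∃ b : ℤ, x.qHu = some b ∧ b ∈ x.Q5) ∨
  (∃ q5 ∈ x.Q5, ∃ q5' ∈ x.Q5, ∃ q10 ∈ x.Q10, q5 + q5' + q10 = 0) ∨
  (∃ q10 ∈ x.Q10, ∃ q10' ∈ x.Q10, ∃ q10'' ∈ x.Q10, ∃ q5 ∈ x.Q5,
    q10 + q10' + q10'' + q5 = 0) ∨
  (∃ a : ℤ, x.qHd = some a ∧ ∃ q10 ∈ x.Q10, ∃ q10' ∈ x.Q10, ∃ q10'' ∈ x.Q10,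
    q10 + q10' + q10'' + a = 0) ∨
  (∃ a : ℤ, x.qHd = some a ∧ ∃ b : ℤ, x.qHu = some b ∧ ∃ q5 ∈ x.Q5,
    q5 + a - 2 * b = 0) ∨
  (∃ q10 ∈ x.Q10, ∃ q10' ∈ x.Q10, ∃ q5 ∈ x.Q5, q10 + q10' - q5 = 0) ∨
  (∃ a : ℤ, x.qHd = some a ∧ ∃ b : ℤ, x.qHu = some b ∧ ∃ q10 ∈ x.Q10,
    a + b + q10 = 0)

/-- `w` minimally allows the top Yukawa: it allows it, but no proper
sub-spectrum does. -/
def MinimallyAllowsTopYukawa (w : ChargeSpectrum) : Prop :=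
  AllowsTopYukawa w ∧ ∀ y : ChargeSpectrum, y ⊆ w → y ≠ w → ¬ AllowsTopYukawa y

/-- The bounded class of charge spectra built from the finite charge menus
`S5` and `S10`. -/
def ofFinset (S5 S10 : Finset ℤ) : Finset ChargeSpectrum :=
  ((({none} ∪ S5.image Option.some) ×ˢ ({none} ∪ S5.image Option.some)) ×ˢ
      (S5.powerset ×ˢ S10.powerset)).image
    fun p => ⟨p.1.1, p.1.2, p.2.1, p.2.2⟩

/-- Insert a charge into the `Q5` sector. -/
def insertQ5 (x : ChargeSpectrum) (q : ℤ) : ChargeSpectrum :=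
  ⟨x.qHd, x.qHu, insert q x.Q5, x.Q10⟩

/-- Insert a charge into the `Q10` sector. -/
def insertQ10 (x : ChargeSpectrum) (q : ℤ) : ChargeSpectrum :=
  ⟨x.qHd, x.qHu, x.Q5, insert q x.Q10⟩

/-- `MemV S5 S10 x` says that `x` lies in the least class `V(S5, S10)` generated
from seeds (completions of minimal top-Yukawa witnesses that are not
pheno-constrained) by the `Q5`- and `Q10`-closure moves. -/
inductive MemV (S5 S10 : Finset ℤ) : ChargeSpectrum → Prop
  | seed (w : ChargeSpectrum) (hw : w ∈ ofFinset S5 S10)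
      (hmin : MinimallyAllowsTopYukawa w) (a b : ℤ) (ha : a ∈ S5) (hb : b ∈ S5)
      (hc : ¬ IsPhenoConstrained ⟨some a, w.qHu, {b}, w.Q10⟩) :
      MemV S5 S10 ⟨some a, w.qHu, {b}, w.Q10⟩
  | q5Closure (x : ChargeSpectrum) (hx : MemV S5 S10 x) (q : ℤ) (hq : q ∈ S5)
      (h : ¬ IsPhenoConstrained (insertQ5 x q)) : MemV S5 S10 (insertQ5 x q)
  | q10Closure (x : ChargeSpectrum) (hx : MemV S5 S10 x) (q : ℤ) (hq : q ∈ S10)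
      (h : ¬ IsPhenoConstrained (insertQ10 x q)) : MemV S5 S10 (insertQ10 x q)

end ChargeSpectrum

open ChargeSpectrum in
/-- every element of `V(S5, S10)` allows the top Yukawa and is not
pheno-constrained. -/
theorem allowsTopYukawa_and_not_isPhenoConstrained_of_memV (S5 S10 : Finset ℤ) :
    ∀ x : ChargeSpectrum, MemV S5 S10 x →
      AllowsTopYukawa x ∧ ¬ IsPhenoConstrained x := by
  intro x hx
  induction hx with
  | seed w hw hmin a b ha hb hc =>
      refine ⟨?_, hc⟩
      obtain ⟨q, hq, q1, h1, q2, h2, hsum⟩ := hmin.1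
      exact ⟨q, hq, q1, h1, q2, h2, hsum⟩
  | q5Closure x hx q hq h ih =>
      refine ⟨?_, h⟩
      obtain ⟨qu, hqu, q1, h1, q2, h2, hsum⟩ := ih.1
      exact ⟨qu, hqu, q1, h1, q2, h2, hsum⟩
  | q10Closure x hx q hq h ih =>
      refine ⟨?_, h⟩
      obtain ⟨qu, hqu, q1, h1, q2, h2, hsum⟩ := ih.1
      exact ⟨qu, hqu, q1, Finset.mem_insert_of_mem h1, q2,
        Finset.mem_insert_of_mem h2, hsum⟩
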